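/- arXiv:0808.0180 — 2 statements merged into one kernel-verified Lean document; each statement's English description precedes it below -/
import Mathlib

section
/- Let n be a positive integer. For all functions f and g in the complex linear span of {e_j : j ∈ Λ_n}, one has (1/(2n²)) · Σ_{k ∈ X_n^*} c_k · f(k/(2n)) · conj(g(k/(2n))) = ∫_{[−1/2,1/2]²} f(x) · conj(g(x)) dx. -/
open MeasureTheory Complex

attribute [local instance] Classical.propDecidable

/-- The exponential e_k(x) = exp(2 pi i (k1 x1 + k2 x2)). -/
noncomputable def e2 (k : ℤ × ℤ) (x : ℝ × ℝ) : ℂ :=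
  Complex.exp (2 * Real.pi * Complex.I * ((k.1 : ℂ) * x.1 + (k.2 : ℂ) * x.2))

/-- The point k/(2n) in the plane. -/
noncomputable def pt2 (n : ℕ) (k : ℤ × ℤ) : ℝ × ℝ :=
  ((k.1 : ℝ) / (2 * n), (k.2 : ℝ) / (2 * n))

/-- Λ_n = {j : -n ≤ j1+j2 < n and -n ≤ j2-j1 < n}. -/
noncomputable def Lam (n : ℕ) : Finset (ℤ × ℤ) :=
  (Finset.Icc (-(n : ℤ), -(n : ℤ)) ((n : ℤ), (n : ℤ))).filter
    fun j => -(n : ℤ) ≤ j.1 + j.2 ∧ j.1 + j.2 < (n : ℤ) ∧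
      -(n : ℤ) ≤ j.2 - j.1 ∧ j.2 - j.1 < (n : ℤ)

/-- X_n^* = {k : k1 ≡ k2 (mod 2), |k_i| ≤ n}. -/
noncomputable def X2star (n : ℕ) : Finset (ℤ × ℤ) :=
  (Finset.Icc (-(n : ℤ), -(n : ℤ)) ((n : ℤ), (n : ℤ))).filter
    fun k => k.1 % 2 = k.2 % 2

/-- The weight c_k on X_n^*. -/
noncomputable def c2 (n : ℕ) (k : ℤ × ℤ) : ℝ :=
  if |k.1| < (n : ℤ) ∧ |k.2| < (n : ℤ) then 1
  else if |k.1| = (n : ℤ) ∧ |k.2| = (n : ℤ) then 1/4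
  else 1/2

/-! Both sides are sesquilinear in `(f, g)`, and `f * conj g` lies in the span of the `e_m` with
`m ∈ Λ_n - Λ_n`, where `|m₁ + m₂| < 2n` and `|m₂ - m₁| < 2n`; so it suffices that the rule is
exact on these `e_m`. At `k / (2n)` the character `e_m` is `ζ₁ ^ k₁ * ζ₂ ^ k₂` with the `2n`-th
roots of unity `ζᵢ = exp (π i mᵢ / n)`. Writing the parity condition `k₁ ≡ k₂ (mod 2)` as
`(1 + (-1) ^ (k₁ + k₂)) / 2` and `c_k` as a product of trapezoid weights splits the lattice sum into
products of one-dimensional trapezoid sums, and such a sum of a `2n`-th root of unity vanishes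
unless the root is `1`. The bounds on `m` leave only `m = 0`, matching `∫ e_m = [m = 0]`. -/

open Finset

noncomputable def trapezoidWeight (K : Type*) [Field K] (n : ℕ) (t : ℤ) : K :=
  if |t| = n then 2⁻¹ else 1

section Trapezoid

variable {K : Type*} [Field K]

theorem sum_Ico_zpow_of_pow_eq_one {ζ : K} {N : ℕ} (hζ : ζ ^ N = 1) (a : ℤ) :
    ∑ t ∈ Ico a (a + N), ζ ^ t = if ζ = 1 then (N : K) else 0 := by
  obtain rfl | hN := N.eq_zero_or_pos
  · simp
  split_ifs with h1
  · simp [h1]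
  · have hζ0 : ζ ≠ 0 := by rintro rfl; simp [hN.ne'] at hζ
    rw [Int.Ico_eq_finset_map, sum_map, add_sub_cancel_left, Int.toNat_natCast]
    simp only [Function.Embedding.trans_apply, Nat.castEmbedding_apply, addLeftEmbedding_apply,
      zpow_add₀ hζ0, zpow_natCast, ← mul_sum, geom_sum_eq h1, hζ, sub_self, zero_div, mul_zero]

theorem sum_Icc_trapezoidWeight_mul_zpow [CharZero K] {n : ℕ} (hn : n ≠ 0) {ζ : K}
    (hζ : ζ ^ (2 * n) = 1) :
    ∑ t ∈ Icc (-n : ℤ) n, trapezoidWeight K n t * ζ ^ t = if ζ = 1 then 2 * (n : K) else 0 := by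
  have hζ0 : ζ ≠ 0 := by rintro rfl; simp [hn] at hζ
  have hends : ζ ^ (n : ℤ) = ζ ^ (-n : ℤ) := by
    rw [zpow_neg]
    refine eq_inv_of_mul_eq_one_left ?_
    rw [← zpow_add₀ hζ0, ← two_mul]
    exact_mod_cast hζ
  have hlt : (-n : ℤ) < n := by omega
  have hinner : ∀ t ∈ Ioo (-n : ℤ) n, trapezoidWeight K n t * ζ ^ t = ζ ^ t := fun t ht => by
    rw [mem_Ioo] at ht
    rw [trapezoidWeight, if_neg (abs_lt.mpr ht).ne, one_mul]
  calc ∑ t ∈ Icc (-n : ℤ) n, trapezoidWeight K n t * ζ ^ t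
      = ∑ t ∈ Ico (-n : ℤ) (-n + (2 * n : ℕ)), ζ ^ t := by
        rw [← Ico_insert_right hlt.le, ← Ioo_insert_left hlt, sum_insert (by simp [hn]),
          sum_insert (by simp), sum_congr rfl hinner,
          show (-n + (2 * n : ℕ) : ℤ) = n by push_cast; ring,
          ← Ioo_insert_left hlt, sum_insert (by simp), trapezoidWeight, trapezoidWeight,
          if_pos (by simp), if_pos (by simp), hends]
        ring
    _ = _ := by rw [sum_Ico_zpow_of_pow_eq_one hζ]; push_cast; rfl

end Trapezoid

section Lattice

local notation "w" => trapezoidWeight ℂ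

theorem c2_eq_trapezoidWeight_mul {n : ℕ} {k : ℤ × ℤ} (h1 : |k.1| ≤ n) (h2 : |k.2| ≤ n) :
    (c2 n k : ℂ) = w n k.1 * w n k.2 := by
  rcases h1.lt_or_eq with h1 | h1 <;> rcases h2.lt_or_eq with h2 | h2 <;>
    norm_num [c2, trapezoidWeight, h1, h2, ne_of_lt]

theorem ite_emod_two_eq (K : Type*) [Field K] [CharZero K] (a b : ℤ) :
    (if a % 2 = b % 2 then 1 else 0 : K) = (1 + (-1) ^ a * (-1) ^ b) / 2 := by
  rw [← zpow_add₀ (neg_ne_zero.mpr one_ne_zero)]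
  split_ifs with h
  · rw [Even.neg_one_zpow (by rw [Int.even_add, Int.even_iff, Int.even_iff]; omega)]
    norm_num
  · rw [Odd.neg_one_zpow (by rw [Int.odd_add, Int.odd_iff, Int.even_iff]; omega)]
    norm_num

theorem sum_X2star_c2_mul_zpow_mul_zpow (n : ℕ) (z₁ z₂ : ℂ) :
    ∑ k ∈ X2star n, (c2 n k : ℂ) * (z₁ ^ k.1 * z₂ ^ k.2)
      = ((∑ t ∈ Icc (-n : ℤ) n, w n t * z₁ ^ t) * (∑ t ∈ Icc (-n : ℤ) n, w n t * z₂ ^ t)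
        + (∑ t ∈ Icc (-n : ℤ) n, w n t * (-z₁) ^ t) * (∑ t ∈ Icc (-n : ℤ) n, w n t * (-z₂) ^ t))
          / 2 := by
  rw [sum_mul_sum, sum_mul_sum, ← sum_product', ← sum_product', ← sum_add_distrib, sum_div,
    X2star, sum_filter,
    show Icc (-(n : ℤ), -(n : ℤ)) (n, n) = Icc (-n : ℤ) n ×ˢ Icc (-n : ℤ) n from Icc_prod_def _ _]
  refine sum_congr rfl fun k hk => ?_
  obtain ⟨h1, h2⟩ := mem_product.mp hk
  rw [← boole_mul, ite_emod_two_eq,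
    c2_eq_trapezoidWeight_mul (abs_le.mpr (mem_Icc.mp h1)) (abs_le.mpr (mem_Icc.mp h2)),
    neg_eq_neg_one_mul z₁, neg_eq_neg_one_mul z₂, mul_zpow, mul_zpow]
  ring

end Lattice

section RootOfUnity

open Complex

noncomputable def zeta (n : ℕ) (r : ℤ) : ℂ := exp (Real.pi * I * r / n)

variable {n : ℕ}

theorem zeta_pow_two_mul (hn : n ≠ 0) (r : ℤ) : zeta n r ^ (2 * n) = 1 := by
  rw [zeta, ← exp_nat_mul, ← exp_int_mul_two_pi_mul_I r]
  congr 1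
  push_cast
  field_simp

theorem zeta_eq_one_iff (hn : n ≠ 0) (r : ℤ) : zeta n r = 1 ↔ (2 * n : ℤ) ∣ r := by
  rw [zeta, exp_eq_one_iff]
  constructor
  · rintro ⟨k, hk⟩
    refine ⟨k, ?_⟩
    have : (r : ℂ) = 2 * n * k := by
      field_simp at hk
      linear_combination hk
    exact_mod_cast this
  · rintro ⟨k, rfl⟩
    exact ⟨k, by push_cast; field_simp⟩

theorem zeta_add_natCast (hn : n ≠ 0) (r : ℤ) : zeta n (r + n) = -zeta n r := by
  rw [zeta, zeta, ← mul_neg_one, ← exp_pi_mul_I, ← exp_add]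
  congr 1
  push_cast
  field_simp

theorem e2_pt2 (m k : ℤ × ℤ) : e2 m (pt2 n k) = zeta n m.1 ^ k.1 * zeta n m.2 ^ k.2 := by
  rw [zeta, zeta, ← exp_int_mul, ← exp_int_mul, ← exp_add, e2, pt2]
  congr 1
  push_cast
  ring

end RootOfUnity

noncomputable def quadrature (n : ℕ) : (ℝ × ℝ → ℂ) →ₗ[ℂ] ℂ where
  toFun h := 1 / (2 * (n : ℂ) ^ 2) * ∑ k ∈ X2star n, (c2 n k : ℂ) * h (pt2 n k)
  map_add' h₁ h₂ := by simp only [Pi.add_apply, mul_add, sum_add_distrib]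
  map_smul' a h := by
    simp only [Pi.smul_apply, smul_eq_mul, RingHom.id_apply, mul_sum]
    exact sum_congr rfl fun _ _ => by ring

theorem quadrature_apply (n : ℕ) (h : ℝ × ℝ → ℂ) :
    quadrature n h = 1 / (2 * (n : ℂ) ^ 2) * ∑ k ∈ X2star n, (c2 n k : ℂ) * h (pt2 n k) := rfl

theorem eq_zero_of_dvd_add_of_dvd_sub {N : ℤ} {m : ℤ × ℤ} (h₁ : |m.1 + m.2| < N)
    (h₂ : |m.2 - m.1| < N) (hd₁ : N ∣ m.1 + m.2) (hd₂ : N ∣ m.2 - m.1) : m = 0 := by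
  have := Int.eq_zero_of_abs_lt_dvd hd₁ h₁
  have := Int.eq_zero_of_abs_lt_dvd hd₂ h₂
  ext <;> simp only [Prod.fst_zero, Prod.snd_zero] <;> omega

theorem quadrature_e2 {n : ℕ} (hn : n ≠ 0) {m : ℤ × ℤ} (h₁ : |m.1 + m.2| < 2 * n)
    (h₂ : |m.2 - m.1| < 2 * n) : quadrature n (e2 m) = if m = 0 then 1 else 0 := by
  have hdvd : (2 * n : ℤ) ∣ m.1 ∧ (2 * n : ℤ) ∣ m.2 ↔ m = 0 := by
    refine ⟨fun ⟨hd₁, hd₂⟩ => eq_zero_of_dvd_add_of_dvd_sub h₁ h₂ (dvd_add hd₁ hd₂)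
      (dvd_sub hd₂ hd₁), fun hm => by simp [hm]⟩
  have hdvd_shift : ¬((2 * n : ℤ) ∣ m.1 + n ∧ (2 * n : ℤ) ∣ m.2 + n) := by
    rintro ⟨hd₁, hd₂⟩
    have hm := eq_zero_of_dvd_add_of_dvd_sub h₁ h₂
      (by rw [show m.1 + m.2 = m.1 + n + (m.2 + n) - 2 * n by ring]
          exact dvd_sub (dvd_add hd₁ hd₂) dvd_rfl)
      (by rw [show m.2 - m.1 = m.2 + n - (m.1 + n) by ring]; exact dvd_sub hd₂ hd₁)
    rw [hm, Prod.fst_zero, zero_add] at hd₁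
    have := Int.le_of_dvd (by omega) hd₁
    omega
  simp only [quadrature_apply, e2_pt2, sum_X2star_c2_mul_zpow_mul_zpow, ← zeta_add_natCast hn,
    sum_Icc_trapezoidWeight_mul_zpow hn (zeta_pow_two_mul hn _), zeta_eq_one_iff hn,
    ite_zero_mul_ite_zero, hdvd, hdvd_shift, if_false, add_zero]
  split_ifs
  · field_simp
  · simp

section Integral

open Complex

theorem integral_Icc_exp_two_pi_I_int_mul (r : ℤ) :
    ∫ t in Set.Icc (-(1 : ℝ) / 2) (1 / 2), exp (2 * Real.pi * I * r * t)
      = if r = 0 then 1 else 0 := by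
  rw [MeasureTheory.integral_Icc_eq_integral_Ioc, ← intervalIntegral.integral_of_le (by norm_num)]
  split_ifs with hr
  · norm_num [hr]
  · have hc : 2 * Real.pi * I * r ≠ 0 := by simp [Real.pi_ne_zero, I_ne_zero, hr]
    rw [integral_exp_mul_complex hc, div_eq_zero_iff, sub_eq_zero]
    exact Or.inl (exp_eq_exp_iff_exists_int.mpr ⟨r, by push_cast; ring⟩)

theorem e2_apply (m : ℤ × ℤ) (x : ℝ × ℝ) :
    e2 m x = exp (2 * Real.pi * I * m.1 * x.1) * exp (2 * Real.pi * I * m.2 * x.2) := by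
  rw [e2, ← exp_add]
  ring_nf

theorem integral_e2 (m : ℤ × ℤ) :
    ∫ x in Set.Icc ((-(1:ℝ)/2, -(1:ℝ)/2)) (((1:ℝ)/2, (1:ℝ)/2)), e2 m x
      = if m = 0 then 1 else 0 := by
  rw [Set.Icc_prod_eq, Measure.volume_eq_prod, ← Measure.prod_restrict]
  simp only [e2_apply]
  rw [integral_prod_mul (fun t : ℝ => exp (2 * Real.pi * I * m.1 * t))
      (fun t : ℝ => exp (2 * Real.pi * I * m.2 * t)),
    integral_Icc_exp_two_pi_I_int_mul, integral_Icc_exp_two_pi_I_int_mul, ite_zero_mul_ite_zero,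
    one_mul]
  simp only [Prod.ext_iff, Prod.fst_zero, Prod.snd_zero]

end Integral

section Span

open Submodule Pointwise

theorem continuous_of_mem_span {X R M : Type*} [TopologicalSpace X] [Semiring R]
    [TopologicalSpace M] [AddCommMonoid M] [Module R M] [ContinuousAdd M] [ContinuousConstSMul R M]
    {s : Set (X → M)} (hs : ∀ g ∈ s, Continuous g) {f : X → M} (hf : f ∈ span R s) :
    Continuous f := by
  induction hf using span_induction with
  | mem g hg => exact hs g hg
  | zero => exact continuous_const
  | add g₁ g₂ _ _ h₁ h₂ => exact h₁.add h₂
  | smul a g _ h => exact h.const_smul a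

theorem continuous_e2 (m : ℤ × ℤ) : Continuous (e2 m) := by
  unfold e2
  fun_prop

theorem e2_mul_star_e2 (j l : ℤ × ℤ) : e2 j * star (e2 l) = e2 (j - l) := by
  ext x
  simp only [Pi.mul_apply, Pi.star_apply, e2, Complex.star_def, ← Complex.exp_conj,
    ← Complex.exp_add, map_mul, map_add, Complex.conj_I, Complex.conj_ofReal, map_intCast,
    map_ofNat, Prod.fst_sub, Prod.snd_sub]
  push_cast
  ring_nf

theorem mul_star_mem_span_e2 {A B : Set (ℤ × ℤ)} {f g : ℝ × ℝ → ℂ} (hf : f ∈ span ℂ (e2 '' A))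
    (hg : g ∈ span ℂ (e2 '' B)) : f * star g ∈ span ℂ (e2 '' (A - B)) := by
  have hg' : star g ∈ span ℂ (star '' (e2 '' B)) :=
    apply_mem_span_image_of_mem_span (starLinearEquiv ℂ).toLinearMap hg
  have hmul : f * star g ∈ span ℂ (e2 '' A * star '' (e2 '' B)) := by
    rw [← span_mul_span]
    exact mul_mem_mul hf hg'
  refine span_mono ?_ hmul
  rintro _ ⟨_, ⟨j, hj, rfl⟩, _, ⟨_, ⟨l, hl, rfl⟩, rfl⟩, rfl⟩
  exact ⟨j - l, Set.sub_mem_sub hj hl, (e2_mul_star_e2 j l).symm⟩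

end Span

open Submodule Pointwise in
theorem quadrature_eq_integral_of_mem_span {n : ℕ} (hn : n ≠ 0) {S : Set (ℤ × ℤ)}
    (hS : ∀ m ∈ S, |m.1 + m.2| < 2 * n ∧ |m.2 - m.1| < 2 * n) {h : ℝ × ℝ → ℂ}
    (hh : h ∈ span ℂ (e2 '' S)) :
    quadrature n h = ∫ x in Set.Icc ((-(1:ℝ)/2, -(1:ℝ)/2)) (((1:ℝ)/2, (1:ℝ)/2)), h x := by
  have hcont : ∀ {g}, g ∈ span ℂ (e2 '' S) → Continuous g :=
    continuous_of_mem_span (Set.forall_mem_image.mpr fun m _ => continuous_e2 m)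
  induction hh using span_induction with
  | mem g hg =>
    obtain ⟨m, hm, rfl⟩ := hg
    rw [quadrature_e2 hn (hS m hm).1 (hS m hm).2, integral_e2]
  | zero => simp
  | add g₁ g₂ hg₁ hg₂ h₁ h₂ =>
    rw [map_add, h₁, h₂, ← integral_add (hcont hg₁).integrableOn_Icc (hcont hg₂).integrableOn_Icc]
    rfl
  | smul a g _ hg => rw [map_smul, hg, ← integral_smul]; rfl

open Pointwise in
theorem abs_lt_of_mem_Lam_sub_Lam {n : ℕ} {m : ℤ × ℤ} (hm : m ∈ (Lam n : Set (ℤ × ℤ)) - Lam n) :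
    |m.1 + m.2| < 2 * n ∧ |m.2 - m.1| < 2 * n := by
  obtain ⟨j, hj, l, hl, rfl⟩ := hm
  simp only [Lam, coe_filter, Set.mem_ofPred_eq] at hj hl
  simp only [Prod.fst_sub, Prod.snd_sub, abs_lt]
  omega

theorem symmetric_discrete_inner_product_eq_integral_2d (n : ℕ) (hn : 0 < n)
    (f g : ℝ × ℝ → ℂ)
    (hf : f ∈ Submodule.span ℂ (e2 '' (Lam n : Set (ℤ × ℤ))))
    (hg : g ∈ Submodule.span ℂ (e2 '' (Lam n : Set (ℤ × ℤ)))) :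
    (1 / (2 * (n : ℂ) ^ 2)) * ∑ k ∈ X2star n, (c2 n k : ℂ) * f (pt2 n k) * star (g (pt2 n k))
      = ∫ x in Set.Icc ((-(1:ℝ)/2, -(1:ℝ)/2)) (((1:ℝ)/2, (1:ℝ)/2)), f x * star (g x) := by
  have h := quadrature_eq_integral_of_mem_span hn.ne' (fun m hm => abs_lt_of_mem_Lam_sub_Lam hm)
    (mul_star_mem_span_e2 hf hg)
  simp only [quadrature_apply, Pi.mul_apply, Pi.star_apply, ← mul_assoc] at h
  exact h
end

section
/- Let n be a positive integer and define Φ_n(x) := (1/(2n²)) · Σ_{ν ∈ Λ_n} e_ν(x). Then for every function f : ℝ² → ℂ and every j ∈ X_n, Σ_{k ∈ X_n} f(k/(2n)) · Φ_n(j/(2n) − k/(2n)) = f(j/(2n)); that is, the trigonometric function I_n f(x) := Σ_{k ∈ X_n} f(k/(2n)) Φ_n(x − k/(2n)) interpolates f at every point k/(2n) with k ∈ X_n. -/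
open MeasureTheory Complex

attribute [local instance] Classical.propDecidable

/-- X_n = {k : k1 ≡ k2 (mod 2), -n ≤ k_i < n}. -/
noncomputable def X2 (n : ℕ) : Finset (ℤ × ℤ) :=
  (Finset.Icc (-(n : ℤ), -(n : ℤ)) ((n : ℤ), (n : ℤ))).filter
    fun k => k.1 % 2 = k.2 % 2 ∧ k.1 < (n : ℤ) ∧ k.2 < (n : ℤ)

/-- Φ_n(x) = (1/(2n²)) Σ_{ν ∈ Λ_n} e_ν(x). -/
noncomputable def Phi2 (n : ℕ) (x : ℝ × ℝ) : ℂ :=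
  (1 / (2 * (n : ℂ) ^ 2)) * ∑ ν ∈ Lam n, e2 ν x

/-- The basic 1d geometric sum. -/
noncomputable def Sgeo (n : ℕ) (c : ℤ) : ℂ :=
  ∑ u ∈ Finset.Icc (-(n : ℤ)) ((n : ℤ) - 1),
    Complex.exp (Real.pi * Complex.I * (u : ℂ) * (c : ℂ) / (n : ℂ))

lemma Sgeo_eq (n : ℕ) (hn : 0 < n) (c : ℤ) :
    Sgeo n c = if (2 * (n : ℤ)) ∣ c then (2 * (n : ℂ)) else 0 := by
  have hn' : (n : ℂ) ≠ 0 := Nat.cast_ne_zero.mpr hn.ne'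
  set z : ℂ := Real.pi * Complex.I * (c : ℂ) / (n : ℂ) with hz
  have hterm : ∀ u : ℤ,
      Complex.exp (Real.pi * Complex.I * (u : ℂ) * (c : ℂ) / (n : ℂ))
        = Complex.exp z ^ u := by
    intro u
    rw [← Complex.exp_int_mul]
    congr 1
    rw [hz]; ring
  by_cases hdvd : (2 * (n : ℤ)) ∣ c
  · obtain ⟨m, hm⟩ := hdvd
    have hz1 : Complex.exp z = 1 := by
      have : z = (m : ℂ) * (2 * Real.pi * Complex.I) := by
        rw [hz, hm]
        push_cast
        field_simp
      rw [this, Complex.exp_int_mul_two_pi_mul_I]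
    simp only [Sgeo, hterm, hz1, one_zpow, Finset.sum_const, nsmul_eq_mul, mul_one]
    rw [if_pos ⟨m, hm⟩, Int.card_Icc]
    have : ((n : ℤ) - 1 + 1 - -(n : ℤ)).toNat = 2 * n := by omega
    rw [this]; push_cast; ring
  · have hne : Complex.exp z ≠ 0 := Complex.exp_ne_zero z
    have hz1 : Complex.exp z ≠ 1 := by
      intro h
      rw [Complex.exp_eq_one_iff] at h
      obtain ⟨m, hm⟩ := h
      rw [hz, div_eq_iff hn'] at hm
      have hπ : (Real.pi : ℂ) ≠ 0 := by
        exact_mod_cast Real.pi_ne_zero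
      have h2 : ((Real.pi : ℂ) * Complex.I) * (c : ℂ)
          = ((Real.pi : ℂ) * Complex.I) * (2 * (n : ℂ) * (m : ℂ)) := by
        linear_combination hm
      have h3 : (c : ℂ) = 2 * (n : ℂ) * (m : ℂ) :=
        mul_left_cancel₀ (mul_ne_zero hπ Complex.I_ne_zero) h2
      have h4 : c = 2 * (n : ℤ) * m := by exact_mod_cast h3
      exact hdvd ⟨m, h4⟩
    have hz2n : Complex.exp z ^ (2 * n) = 1 := by
      rw [← Complex.exp_nat_mul]
      have : (↑(2 * n) : ℂ) * z = (c : ℂ) * (2 * Real.pi * Complex.I) := by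
        rw [hz]; push_cast; field_simp
      rw [this, Complex.exp_int_mul_two_pi_mul_I]
    have hre : Sgeo n c = ∑ i ∈ Finset.range (2 * n), Complex.exp z ^ ((i : ℤ) - (n : ℤ)) := by
      rw [Sgeo]
      refine Finset.sum_nbij' (fun u => (u + (n : ℤ)).toNat) (fun i => (i : ℤ) - (n : ℤ))
        ?_ ?_ ?_ ?_ ?_
      · intro u hu
        simp only [Finset.mem_Icc] at hu
        simp only [Finset.mem_range]
        omega
      · intro i hi
        simp only [Finset.mem_range] at hi
        simp only [Finset.mem_Icc]
        omega
      · intro u hu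
        simp only [Finset.mem_Icc] at hu
        omega
      · intro i hi
        simp only [Finset.mem_range] at hi
        omega
      · intro u hu
        simp only [Finset.mem_Icc] at hu
        rw [hterm]
        congr 1
        omega
    rw [hre, if_neg hdvd]
    have hsplit : ∀ i : ℕ, Complex.exp z ^ ((i : ℤ) - (n : ℤ))
        = Complex.exp z ^ (-(n : ℤ)) * Complex.exp z ^ i := by
      intro i
      rw [sub_eq_add_neg, add_comm, zpow_add₀ hne, zpow_natCast]
    simp only [hsplit]
    rw [← Finset.mul_sum, geom_sum_eq hz1, hz2n]
    simp

/-- The exponential weight appearing in the sums over `X2 n`. -/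
noncomputable def Ew (n : ℕ) (a b : ℤ) (k : ℤ × ℤ) : ℂ :=
  Complex.exp (Real.pi * Complex.I * ((k.1 : ℂ) * (a : ℂ) + (k.2 : ℂ) * (b : ℂ)) / (n : ℂ))

lemma box_sum (n : ℕ) (a b : ℤ) :
    ∑ k ∈ Finset.Icc ((-(n : ℤ), -(n : ℤ))) (((n : ℤ) - 1, (n : ℤ) - 1)), Ew n a b k
      = Sgeo n a * Sgeo n b := by
  rw [Finset.Icc_prod_def, Finset.sum_product, Sgeo, Sgeo, Finset.sum_mul_sum]
  refine Finset.sum_congr rfl fun u hu => Finset.sum_congr rfl fun v hv => ?_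
  rw [Ew, ← Complex.exp_add]
  congr 1
  ring

lemma X2_eq_filter (n : ℕ) :
    X2 n = (Finset.Icc ((-(n : ℤ), -(n : ℤ))) (((n : ℤ) - 1, (n : ℤ) - 1))).filter
      (fun k => k.1 % 2 = k.2 % 2) := by
  ext k
  simp only [X2, Finset.mem_filter, Finset.mem_Icc, Prod.le_def]
  omega

lemma Ew_shift (n : ℕ) (hn : 0 < n) (a b : ℤ) (k : ℤ × ℤ) :
    Ew n (a + n) (b + n) k = Ew n a b k * Complex.exp (((k.1 + k.2 : ℤ) : ℂ) * (Real.pi * Complex.I)) := by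
  have hn' : (n : ℂ) ≠ 0 := Nat.cast_ne_zero.mpr hn.ne'
  rw [Ew, Ew, ← Complex.exp_add]
  congr 1
  push_cast
  field_simp
  ring

lemma exp_pi_int_even (t : ℤ) :
    Complex.exp (((2 * t : ℤ) : ℂ) * (Real.pi * Complex.I)) = 1 := by
  have : ((2 * t : ℤ) : ℂ) * (Real.pi * Complex.I) = (t : ℂ) * (2 * Real.pi * Complex.I) := by
    push_cast; ring
  rw [this, Complex.exp_int_mul_two_pi_mul_I]

lemma exp_pi_int_odd (t : ℤ) :
    Complex.exp (((2 * t + 1 : ℤ) : ℂ) * (Real.pi * Complex.I)) = -1 := by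
  have : ((2 * t + 1 : ℤ) : ℂ) * (Real.pi * Complex.I)
      = (t : ℂ) * (2 * Real.pi * Complex.I) + Real.pi * Complex.I := by
    push_cast; ring
  rw [this, Complex.exp_add, Complex.exp_int_mul_two_pi_mul_I, Complex.exp_pi_mul_I, one_mul]

lemma X2_sum (n : ℕ) (hn : 0 < n) (a b : ℤ) :
    2 * ∑ k ∈ X2 n, Ew n a b k
      = Sgeo n a * Sgeo n b + Sgeo n (a + n) * Sgeo n (b + n) := by
  rw [← box_sum n a b, ← box_sum n (a + n) (b + n)]
  set Box := Finset.Icc ((-(n : ℤ), -(n : ℤ))) (((n : ℤ) - 1, (n : ℤ) - 1)) with hBox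
  have key : ∑ k ∈ Box, Ew n a b k + ∑ k ∈ Box, Ew n (a + n) (b + n) k
      = ∑ k ∈ Box, (Ew n a b k + Ew n (a + n) (b + n) k) := by
    rw [Finset.sum_add_distrib]
  rw [key, ← Finset.sum_filter_add_sum_filter_not Box (fun k => k.1 % 2 = k.2 % 2)]
  have h1 : ∀ k ∈ Box.filter (fun k => k.1 % 2 = k.2 % 2),
      Ew n a b k + Ew n (a + n) (b + n) k = 2 * Ew n a b k := by
    intro k hk
    simp only [Finset.mem_filter] at hk
    obtain ⟨t, ht⟩ : ∃ t : ℤ, k.1 + k.2 = 2 * t := ⟨(k.1 + k.2) / 2, by omega⟩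
    rw [Ew_shift n hn, ht, exp_pi_int_even, mul_one]
    ring
  have h2 : ∀ k ∈ Box.filter (fun k => ¬ k.1 % 2 = k.2 % 2),
      Ew n a b k + Ew n (a + n) (b + n) k = 0 := by
    intro k hk
    simp only [Finset.mem_filter] at hk
    obtain ⟨t, ht⟩ : ∃ t : ℤ, k.1 + k.2 = 2 * t + 1 := ⟨(k.1 + k.2 - 1) / 2, by omega⟩
    rw [Ew_shift n hn, ht, exp_pi_int_odd]
    ring
  rw [Finset.sum_congr rfl h1, Finset.sum_congr rfl h2, Finset.sum_const, smul_zero, add_zero,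
    ← Finset.mul_sum, X2_eq_filter]

lemma Lam_sum (n : ℕ) (hn : 0 < n) (m : ℤ × ℤ) (a b : ℤ)
    (h1 : m.1 = a - b) (h2 : m.2 = a + b) :
    ∑ ν ∈ Lam n, e2 ν (pt2 n m) = ∑ k ∈ X2 n, Ew n a b k := by
  have hn' : (n : ℂ) ≠ 0 := Nat.cast_ne_zero.mpr hn.ne'
  refine Finset.sum_nbij' (fun ν => (ν.1 + ν.2, ν.2 - ν.1))
    (fun k => ((k.1 - k.2) / 2, (k.1 + k.2) / 2)) ?_ ?_ ?_ ?_ ?_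
  · intro ν hν
    simp only [Lam, X2, Finset.mem_filter, Finset.mem_Icc, Prod.le_def] at hν ⊢
    omega
  · intro k hk
    simp only [Lam, X2, Finset.mem_filter, Finset.mem_Icc, Prod.le_def] at hk ⊢
    omega
  · intro ν hν
    simp only [Lam, Finset.mem_filter, Finset.mem_Icc, Prod.le_def] at hν
    ext <;> simp <;> omega
  · intro k hk
    simp only [X2, Finset.mem_filter, Finset.mem_Icc, Prod.le_def] at hk
    ext <;> simp <;> omega
  · intro ν hν
    rw [e2, Ew]
    congr 1
    simp only [pt2]
    push_cast
    rw [h1, h2]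
    push_cast
    field_simp
    ring

lemma not_two_n_dvd_n (n : ℕ) (hn : 0 < n) : ¬ (2 * (n : ℤ)) ∣ (n : ℤ) := by
  intro h
  have := Int.le_of_dvd (by exact_mod_cast hn) h
  omega

lemma dvd_small_eq_zero (n : ℕ) (hn : 0 < n) (x : ℤ) (hd : (2 * (n : ℤ)) ∣ x)
    (hlo : -(2 * (n : ℤ)) < x) (hhi : x < 2 * (n : ℤ)) : x = 0 := by
  obtain ⟨c, rfl⟩ := hd
  have hn' : (0 : ℤ) < n := by exact_mod_cast hn
  have hc1 : c < 1 := by nlinarith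
  have hc2 : -1 < c := by nlinarith
  have : c = 0 := by omega
  rw [this, mul_zero]

lemma dvd_shift_pm (n : ℕ) (hn : 0 < n) (x : ℤ) (hd : (2 * (n : ℤ)) ∣ (x + n))
    (hlo : -(2 * (n : ℤ)) < x) (hhi : x < 2 * (n : ℤ)) : x = n ∨ x = -(n : ℤ) := by
  obtain ⟨c, hc⟩ := hd
  have hn' : (0 : ℤ) < n := by exact_mod_cast hn
  have hc1 : c < 2 := by nlinarith
  have hc2 : -1 < c := by nlinarith
  interval_cases c <;> omega

lemma Phi2_delta (n : ℕ) (hn : 0 < n) (j k : ℤ × ℤ) (hj : j ∈ X2 n) (hk : k ∈ X2 n) :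
    Phi2 n (pt2 n j - pt2 n k) = if j = k then 1 else 0 := by
  have hn' : (n : ℂ) ≠ 0 := Nat.cast_ne_zero.mpr hn.ne'
  have hpt : pt2 n j - pt2 n k = pt2 n (j - k) := by
    simp only [pt2, Prod.mk_sub_mk, Prod.fst_sub, Prod.snd_sub, Prod.mk.injEq]
    constructor <;> · push_cast; ring
  set m : ℤ × ℤ := j - k with hm
  simp only [X2, Finset.mem_filter, Finset.mem_Icc, Prod.le_def] at hj hk
  have hm1 : m.1 = j.1 - k.1 := rfl
  have hm2 : m.2 = j.2 - k.2 := rfl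
  obtain ⟨a, b, h1, h2⟩ : ∃ a b : ℤ, m.1 = a - b ∧ m.2 = a + b := by
    refine ⟨(m.1 + m.2) / 2, (m.2 - m.1) / 2, ?_, ?_⟩ <;> omega
  have hbm1 : -(2 * (n : ℤ)) < m.1 ∧ m.1 < 2 * n := by omega
  have hbm2 : -(2 * (n : ℤ)) < m.2 ∧ m.2 < 2 * n := by omega
  have hba : -(2 * (n : ℤ)) < a ∧ a < 2 * n := by omega
  have hbb : -(2 * (n : ℤ)) < b ∧ b < 2 * n := by omega
  have hsum := Lam_sum n hn m a b h1 h2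
  have hX := X2_sum n hn a b
  rw [← hsum] at hX
  rw [hpt, Phi2]
  by_cases hjk : j = k
  · have hm0 : m = 0 := by rw [hm, hjk, sub_self]
    have ha0 : a = 0 := by
      have := hm0 ▸ h1; have := hm0 ▸ h2
      simp only [hm0, Prod.fst_zero, Prod.snd_zero] at h1 h2
      omega
    have hb0 : b = 0 := by
      simp only [hm0, Prod.fst_zero, Prod.snd_zero] at h1 h2
      omega
    rw [ha0, hb0] at hX
    have e0 : Sgeo n 0 = 2 * (n : ℂ) := by
      rw [Sgeo_eq n hn]; exact if_pos (dvd_zero _)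
    have en : Sgeo n (0 + (n : ℤ)) = 0 := by
      rw [Sgeo_eq n hn, if_neg (by simpa using not_two_n_dvd_n n hn)]
    rw [e0, en] at hX
    have hS : ∑ ν ∈ Lam n, e2 ν (pt2 n m) = 2 * (n : ℂ) ^ 2 := by
      linear_combination hX / 2
    rw [hS, if_pos hjk]
    field_simp
  · have hmne : ¬(m.1 = 0 ∧ m.2 = 0) := by
      intro h
      apply hjk
      have : j - k = 0 := Prod.ext h.1 h.2
      exact sub_eq_zero.mp this
    have hfirst : Sgeo n a * Sgeo n b = 0 := by
      by_cases hda : (2 * (n : ℤ)) ∣ a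
      · have ha0 := dvd_small_eq_zero n hn a hda hba.1 hba.2
        have hdb : ¬ (2 * (n : ℤ)) ∣ b := by
          intro hdb
          have hb0 := dvd_small_eq_zero n hn b hdb hbb.1 hbb.2
          exact hmne ⟨by omega, by omega⟩
        rw [Sgeo_eq n hn b, if_neg hdb, mul_zero]
      · rw [Sgeo_eq n hn a, if_neg hda, zero_mul]
    have hsecond : Sgeo n (a + n) * Sgeo n (b + n) = 0 := by
      by_cases hda : (2 * (n : ℤ)) ∣ (a + n)
      · have ha := dvd_shift_pm n hn a hda hba.1 hba.2
        have hdb : ¬ (2 * (n : ℤ)) ∣ (b + n) := by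
          intro hdb
          have hb := dvd_shift_pm n hn b hdb hbb.1 hbb.2
          rcases ha with ha | ha <;> rcases hb with hb | hb <;> omega
        rw [Sgeo_eq n hn (b + n), if_neg hdb, mul_zero]
      · rw [Sgeo_eq n hn (a + n), if_neg hda, zero_mul]
    have hS : ∑ ν ∈ Lam n, e2 ν (pt2 n m) = 0 := by
      rw [hfirst, hsecond, add_zero] at hX
      linear_combination hX / 2
    rw [hS, if_neg hjk, mul_zero]

theorem trig_interpolation_2d (n : ℕ) (hn : 0 < n) (f : ℝ × ℝ → ℂ)
    (j : ℤ × ℤ) (hj : j ∈ X2 n) :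
    ∑ k ∈ X2 n, f (pt2 n k) * Phi2 n (pt2 n j - pt2 n k) = f (pt2 n j) := by
  rw [Finset.sum_eq_single_of_mem j hj]
  · rw [Phi2_delta n hn j j hj hj, if_pos rfl, mul_one]
  · intro k hk hne
    rw [Phi2_delta n hn j k hj hk, if_neg (fun h => hne h.symm), mul_zero]
end
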